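/- Let G be a finite group and A a finite set of size q ≥ 2. Then the following are equivalent: (1) for every x ∈ A^G and every y in the G-orbit of x, there exists a bijective G-equivariant transformation τ : A^G → A^G with τ(x) = y; (2) every subgroup of G is normal (G is a Dedekind group). -/

import Mathlib

variable {G A : Type*}

/-- The right shift action of `G` on configurations `A^G`: `(x · g) h = x (h * g⁻¹)`. -/
def shift [Group G] (x : G → A) (g : G) : G → A := fun h => x (h * g⁻¹)

/-- A transformation of the configuration space is `G`-equivariant if it commutes
with the shift action. -/
def equivariant [Group G] (τ : (G → A) → (G → A)) : Prop :=
  ∀ (x : G → A) (g : G), τ (shift x g) = shift (τ x) g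

/-- The `G`-orbit of a configuration. -/
def orbit [Group G] (x : G → A) : Set (G → A) := Set.range (shift x)

/-- The stabilizer of a configuration, as a subgroup of `G`. -/
def stab [Group G] (x : G → A) : Subgroup G where
  carrier := {g : G | shift x g = x}
  one_mem' := by
    show shift x 1 = x
    funext h
    simp [shift]
  mul_mem' := by
    intro a b ha hb
    have ha' : shift x a = x := ha
    have hb' : shift x b = x := hb
    show shift x (a * b) = x
    funext h
    show x (h * (a * b)⁻¹) = x h
    have key : h * (a * b)⁻¹ = h * b⁻¹ * a⁻¹ := by group
    rw [key]
    have h1 := congrFun ha' (h * b⁻¹)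
    have h2 := congrFun hb' h
    simp only [shift] at h1 h2
    rw [h1, h2]
  inv_mem' := by
    intro a ha
    have ha' : shift x a = x := ha
    show shift x a⁻¹ = x
    funext h
    show x (h * a⁻¹⁻¹) = x h
    rw [inv_inv]
    have h1 := congrFun ha' (h * a)
    simp only [shift] at h1
    rw [mul_inv_cancel_right] at h1
    exact h1.symm

/-- Two subgroups `H`, `K` of `G` are conjugate, namely `K = g⁻¹ * H * g` for some `g ∈ G`. -/
def conjSub [Group G] (H K : Subgroup G) : Prop :=
  ∃ g : G, ∀ a : G, a ∈ K ↔ g * a * g⁻¹ ∈ H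

/-!
Equivariant injections preserve stabilizers, while `stab (x · g) = g⁻¹ (stab x) g`; since the
configuration equal to `a` on `H` and to `b ≠ a` off `H` has stabilizer `H`, transitivity on its
orbit forces `H` to be normal. Conversely, if `stab x` is normal then left translation
`x · h ↦ x · (c h)` is well defined on the orbit of `x`, and extended by the identity off that
orbit it is an equivariant bijection sending `x` to `x · c`.
-/

section Shift

variable [Group G]

@[simp]
lemma shift_one (x : G → A) : shift x 1 = x := by
  funext h; simp [shift]

@[simp]
lemma shift_shift (x : G → A) (g h : G) : shift (shift x g) h = shift x (g * h) := by
  funext k; simp [shift, mul_assoc]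

lemma mem_stab_iff {x : G → A} {k : G} : k ∈ stab x ↔ shift x k = x := Iff.rfl

lemma shift_eq_shift_iff {x : G → A} {a b : G} : shift x a = shift x b ↔ a * b⁻¹ ∈ stab x := by
  rw [mem_stab_iff]
  constructor
  · intro h
    simpa using congrArg (shift · b⁻¹) h
  · intro h
    simpa using congrArg (shift · b) h

lemma mem_stab_shift_iff {x : G → A} {g k : G} : k ∈ stab (shift x g) ↔ g * k * g⁻¹ ∈ stab x := by
  rw [mem_stab_iff, shift_shift, shift_eq_shift_iff, mul_assoc]

lemma shift_mem_orbit_iff {x z : G → A} {k : G} : shift z k ∈ orbit x ↔ z ∈ orbit x := by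
  constructor
  · rintro ⟨m, hm⟩
    exact ⟨m * k⁻¹, by rw [← shift_shift, hm, shift_shift, mul_inv_cancel, shift_one]⟩
  · rintro ⟨m, rfl⟩
    exact ⟨m * k, (shift_shift x m k).symm⟩

lemma stab_ite_mem (H : Subgroup G) [DecidablePred (· ∈ H)] {a b : A} (hab : a ≠ b) :
    stab (fun h : G => if h ∈ H then a else b) = H := by
  ext k
  rw [mem_stab_iff, funext_iff]
  simp only [shift]
  constructor
  · intro hk
    have hk₁ : k ∉ H → b = a := by simpa using hk 1
    by_contra hkH
    exact hab (hk₁ hkH).symm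
  · intro hk h
    exact if_congr (mul_mem_cancel_right (H.inv_mem hk)) rfl rfl

lemma stab_eq_of_equivariant {τ : (G → A) → (G → A)} (hτ : equivariant τ)
    (hinj : Function.Injective τ) (x : G → A) : stab (τ x) = stab x := by
  ext k
  rw [mem_stab_iff, mem_stab_iff, ← hτ, hinj.eq_iff]

lemma normal_stab_of_forall_shift
    {x : G → A} (hT : ∀ g : G, ∃ τ : (G → A) → (G → A),
      Function.Injective τ ∧ equivariant τ ∧ τ x = shift x g) :
    (stab x).Normal := by
  refine ⟨fun n hn g => ?_⟩
  obtain ⟨τ, hinj, hτ, hτx⟩ := hT g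
  have hstab : stab (shift x g) = stab x := hτx ▸ stab_eq_of_equivariant hτ hinj x
  exact mem_stab_shift_iff.mp (hstab ▸ hn)

lemma shift_mul_left_eq {x : G → A} (hN : (stab x).Normal) (c : G) {h h' : G}
    (hh : shift x h = shift x h') : shift x (c * h) = shift x (c * h') := by
  rw [shift_eq_shift_iff] at hh ⊢
  have e : c * h * (c * h')⁻¹ = c * (h * h'⁻¹) * c⁻¹ := by group
  rw [e]
  exact hN.conj_mem _ hh c

noncomputable def orbitTranslate (x : G → A) (c : G) (z : G → A) : G → A := by
  classical
  exact if hz : z ∈ orbit x then shift x (c * hz.choose) else z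

lemma orbitTranslate_of_not_mem {x : G → A} (c : G) {z : G → A} (hz : z ∉ orbit x) :
    orbitTranslate x c z = z := by
  rw [orbitTranslate, dif_neg hz]

variable {x : G → A} (hN : (stab x).Normal)
include hN

lemma orbitTranslate_shift (c h : G) : orbitTranslate x c (shift x h) = shift x (c * h) := by
  have hz : shift x h ∈ orbit x := ⟨h, rfl⟩
  rw [orbitTranslate, dif_pos hz]
  exact shift_mul_left_eq hN c hz.choose_spec

lemma orbitTranslate_inv_orbitTranslate (c : G) (z : G → A) :
    orbitTranslate x c⁻¹ (orbitTranslate x c z) = z := by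
  by_cases hz : z ∈ orbit x
  · obtain ⟨m, rfl⟩ := hz
    rw [orbitTranslate_shift hN, orbitTranslate_shift hN, inv_mul_cancel_left]
  · rw [orbitTranslate_of_not_mem c hz, orbitTranslate_of_not_mem c⁻¹ hz]

lemma bijective_orbitTranslate (c : G) : Function.Bijective (orbitTranslate x c) := by
  refine Function.bijective_iff_has_inverse.mpr ⟨orbitTranslate x c⁻¹, ?_, ?_⟩
  · exact orbitTranslate_inv_orbitTranslate hN c
  · intro z
    simpa only [inv_inv] using orbitTranslate_inv_orbitTranslate hN c⁻¹ z

lemma equivariant_orbitTranslate (c : G) : equivariant (orbitTranslate x c) := by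
  intro z k
  by_cases hz : z ∈ orbit x
  · obtain ⟨m, rfl⟩ := hz
    simp only [shift_shift, orbitTranslate_shift hN, mul_assoc]
  · rw [orbitTranslate_of_not_mem c hz,
      orbitTranslate_of_not_mem c (mt shift_mem_orbit_iff.mp hz)]

end Shift

theorem transitive_on_orbits_iff_dedekind_general [Group G] [Fintype A]
    (hq : 2 ≤ Fintype.card A) :
    (∀ x : G → A, ∀ y ∈ orbit x,
        ∃ τ : (G → A) → (G → A), Function.Bijective τ ∧ equivariant τ ∧ τ x = y) ↔
      (∀ H : Subgroup G, H.Normal) := by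
  constructor
  · intro hT H
    classical
    obtain ⟨a, b, hab⟩ := Fintype.one_lt_card_iff.mp hq
    rw [← stab_ite_mem H hab]
    exact normal_stab_of_forall_shift fun g =>
      (hT _ _ ⟨g, rfl⟩).imp fun _ hτ => ⟨hτ.1.injective, hτ.2⟩
  · rintro hN x _ ⟨g, rfl⟩
    have hNx := hN (stab x)
    refine ⟨orbitTranslate x g, bijective_orbitTranslate hNx g,
      equivariant_orbitTranslate hNx g, ?_⟩
    simpa using orbitTranslate_shift hNx g 1

/-- the group of bijective `G`-equivariant transformations of `A^G`
is transitive on every `G`-orbit iff every subgroup of `G` is normal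
(`G` is a Dedekind group). -/
theorem transitive_on_orbits_iff_dedekind [Group G] [Fintype G] [Fintype A]
    (hq : 2 ≤ Fintype.card A) :
    (∀ x : G → A, ∀ y ∈ orbit x,
        ∃ τ : (G → A) → (G → A), Function.Bijective τ ∧ equivariant τ ∧ τ x = y) ↔
      (∀ H : Subgroup G, H.Normal) :=
  transitive_on_orbits_iff_dedekind_general hq
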